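/- As ε → 0 in the reals, the product over primes satisfies Π_p [1 − (1 − p^{iε})²/(p−1)²] = 1 + c₀·ε² + i·Q·ε³ + O(ε⁴), where c₀ = Σ_p (log p)²/(p−1)² and Q = Σ_p (log p)³/(p−1)². -/

import Mathlib

open Real Complex Filter Asymptotics Topology

/-! Each factor is `1 + a_p(ε)` with `a_p(ε) = -(1 - e^{iε log p})²/(p-1)²`, and
`‖1 - e^{iθ}‖ ≤ |θ|` gives `‖a_p(ε)‖ ≤ ε² (log p)²/(p-1)²`. Comparing `∏ (1 + a_p)` with
`exp (∑ ‖a_p‖)` shows `∏ (1 + a_p) = 1 + ∑ a_p + O((∑ ‖a_p‖)²) = 1 + ∑ a_p + O(ε⁴)`.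
The Taylor expansion `(1 - e^{iθ})² = -θ² - iθ³ + O(θ⁴)`, uniform in real `θ`, then gives
`∑ a_p = c₀ ε² + i Q ε³ + O(ε⁴ ∑ (log p)⁴/(p-1)²)`; the sums converge since
`(log p)^k ≪ p^{1/2}`. -/

section NormedRing

variable {ι R : Type*} [NormedCommRing R] [NormOneClass R]

lemma Finset.norm_prod_one_add_sub_one_sub_sum_le (t : Finset ι) (f : ι → R) :
    ‖∏ i ∈ t, (1 + f i) - 1 - ∑ i ∈ t, f i‖
      ≤ Real.exp (∑ i ∈ t, ‖f i‖) - 1 - ∑ i ∈ t, ‖f i‖ := by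
  classical
  induction t using Finset.induction_on with
  | empty => simp
  | insert x t hx IH =>
    rw [Finset.prod_insert hx, Finset.sum_insert hx, Finset.sum_insert hx, Real.exp_add,
      show (1 + f x) * ∏ i ∈ t, (1 + f i) - 1 - (f x + ∑ i ∈ t, f i) =
        (∏ i ∈ t, (1 + f i) - 1 - ∑ i ∈ t, f i) + f x * (∏ i ∈ t, (1 + f i) - 1) by ring]
    have hmul := (norm_mul_le (f x) _).trans
      (mul_le_mul_of_nonneg_left (t.norm_prod_one_add_sub_one_le f) (norm_nonneg (f x)))
    have hexp : ‖f x‖ + 1 ≤ Real.exp ‖f x‖ := Real.add_one_le_exp _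
    have hpos := Real.exp_pos (∑ i ∈ t, ‖f i‖)
    nlinarith [norm_add_le_of_le IH hmul]

lemma norm_tprod_one_add_sub_one_sub_tsum_le [CompleteSpace R] {f : ι → R}
    (hf : Summable fun i ↦ ‖f i‖) :
    ‖∏' i, (1 + f i) - 1 - ∑' i, f i‖ ≤ Real.exp (∑' i, ‖f i‖) - 1 - ∑' i, ‖f i‖ :=
  le_of_tendsto_of_tendsto'
    (((multipliable_one_add_of_summable hf).hasProd.sub_const 1).sub hf.of_norm.hasSum).norm
    (((Real.continuous_exp.tendsto _).comp hf.hasSum).sub_const 1 |>.sub hf.hasSum)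
    fun t ↦ t.norm_prod_one_add_sub_one_sub_sum_le f

end NormedRing

lemma exists_norm_one_sub_cexp_I_mul_sq_add_le :
    ∃ C, ∀ θ : ℝ, ‖(1 - cexp (I * θ)) ^ 2 + θ ^ 2 + I * θ ^ 3‖ ≤ C * θ ^ 4 := by
  set R : ℂ → ℂ := fun y ↦ cexp y - ∑ m ∈ Finset.range 4, y ^ m / m.factorial
  have hR (y : ℂ) : ‖R y‖ ≤ ‖y‖ ^ 4 * Real.exp ‖y‖ := norm_exp_sub_sum_le_norm_mul_exp y 4
  refine ⟨max 3 (2 * Real.exp 1 + 16 * Real.exp 2), fun θ ↦ ?_⟩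
  have hθ4 : 0 ≤ θ ^ 4 := by positivity
  rcases le_or_gt |θ| 1 with hθ | hθ
  · -- `(1 - e^x)² = 1 - 2e^x + e^{2x}` has Taylor polynomial `x² + x³` of degree 3
    have key : (1 - cexp (I * θ)) ^ 2 + θ ^ 2 + I * θ ^ 3 = R (2 * (I * θ)) - 2 * R (I * θ) := by
      simp only [R, Finset.sum_range_succ, Finset.sum_range_zero, two_mul (I * θ), Complex.exp_add]
      push_cast [Nat.factorial]
      ring_nf
      rw [I_sq, I_pow_three]
      ring
    have hx : ‖I * (θ : ℂ)‖ = |θ| := by simp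
    have h2x : ‖2 * (I * (θ : ℂ))‖ = 2 * |θ| := by simp
    have e1 : Real.exp |θ| ≤ Real.exp 1 := Real.exp_le_exp.mpr hθ
    have e2 : Real.exp (2 * |θ|) ≤ Real.exp 2 := Real.exp_le_exp.mpr (by linarith)
    have habs : |θ| ^ 4 = θ ^ 4 := by rw [pow_abs, abs_of_nonneg hθ4]
    calc _ = ‖R (2 * (I * θ)) - 2 * R (I * θ)‖ := by rw [key]
      _ ≤ ‖R (2 * (I * θ))‖ + 2 * ‖R (I * θ)‖ := by
          refine (norm_sub_le _ _).trans ?_; rw [norm_mul]; norm_num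
      _ ≤ (2 * |θ|) ^ 4 * Real.exp 2 + 2 * (|θ| ^ 4 * Real.exp 1) := by
          gcongr
          · exact (hR _).trans (by rw [h2x]; gcongr)
          · exact (hR _).trans (by rw [hx]; gcongr)
      _ = (2 * Real.exp 1 + 16 * Real.exp 2) * θ ^ 4 := by rw [← habs]; ring
      _ ≤ _ := by gcongr; exact le_max_right _ _
  · have h1 : ‖1 - cexp (I * θ)‖ ≤ |θ| := by
      rw [norm_sub_rev]; simpa using norm_exp_I_mul_ofReal_sub_one_le (x := θ)
    calc _ ≤ ‖1 - cexp (I * θ)‖ ^ 2 + ‖(θ : ℂ) ^ 2‖ + ‖I * (θ : ℂ) ^ 3‖ := by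
          refine (norm_add₃_le ..).trans ?_; rw [norm_pow]
      _ ≤ |θ| ^ 2 + |θ| ^ 2 + |θ| ^ 3 := by
          gcongr <;> simp
      _ ≤ 3 * θ ^ 4 := by
          rw [show θ ^ 4 = |θ| ^ 4 by rw [pow_abs, abs_of_nonneg hθ4]]
          nlinarith [pow_le_pow_right₀ hθ.le (show 2 ≤ 4 by norm_num),
            pow_le_pow_right₀ hθ.le (show 3 ≤ 4 by norm_num)]
      _ ≤ _ := by gcongr; exact le_max_left _ _

section Asymptotics

variable {α ι : Type*} {l : Filter α}

lemma isBigO_tsum_sub_tsum {E : Type*} [NormedAddCommGroup E] {f g : α → ι → E} {ψ : α → ℝ}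
    {w : ι → ℝ} (hf : ∀ x, Summable (f x)) (hg : ∀ x, Summable (g x)) (hw : Summable w)
    (hfg : ∀ x i, ‖f x i - g x i‖ ≤ ψ x * w i) :
    (fun x ↦ ∑' i, f x i - ∑' i, g x i) =O[l] ψ := by
  refine .of_bound |∑' i, w i| (Eventually.of_forall fun x ↦ ?_)
  rw [← (hf x).tsum_sub (hg x)]
  calc ‖∑' i, (f x i - g x i)‖ ≤ ψ x * ∑' i, w i :=
        tsum_of_norm_bounded (hw.hasSum.mul_left _) (hfg x)
    _ ≤ |∑' i, w i| * ‖ψ x‖ := by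
        rw [mul_comm, Real.norm_eq_abs, ← abs_mul]; exact le_abs_self _

lemma isBigO_tprod_one_add_sub_one_sub_tsum {R : Type*} [NormedCommRing R] [NormOneClass R]
    [CompleteSpace R] {a : α → ι → R} {φ : α → ℝ} {u : ι → ℝ} (hφ : Tendsto φ l (𝓝 0))
    (hu : Summable u) (ha : ∀ x i, ‖a x i‖ ≤ φ x * u i) :
    (fun x ↦ ∏' i, (1 + a x i) - 1 - ∑' i, a x i) =O[l] fun x ↦ φ x ^ 2 := by
  set U := ∑' i, u i
  have hsum (x : α) : Summable fun i ↦ ‖a x i‖ :=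
    .of_nonneg_of_le (fun _ ↦ norm_nonneg _) (ha x) (hu.mul_left _)
  have hT (x : α) : ∑' i, ‖a x i‖ ≤ φ x * U := by
    rw [← tsum_mul_left]; exact (hsum x).tsum_le_tsum (ha x) (hu.mul_left _)
  have hsmall : ∀ᶠ x in l, φ x * U ≤ 1 :=
    (by simpa using hφ.mul_const U : Tendsto (φ · * U) l (𝓝 0)).eventually_le_const one_pos
  refine .of_bound (U ^ 2) (hsmall.mono fun x hx ↦ ?_)
  have hT0 : 0 ≤ ∑' i, ‖a x i‖ := tsum_nonneg fun _ ↦ norm_nonneg _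
  calc _ ≤ Real.exp (∑' i, ‖a x i‖) - 1 - ∑' i, ‖a x i‖ :=
        norm_tprod_one_add_sub_one_sub_tsum_le (hsum x)
    _ ≤ (∑' i, ‖a x i‖) ^ 2 := le_of_abs_le (Real.abs_exp_sub_one_sub_id_le
        (by rw [abs_of_nonneg hT0]; exact (hT x).trans hx))
    _ ≤ (φ x * U) ^ 2 := pow_le_pow_left₀ hT0 (hT x) 2
    _ = U ^ 2 * ‖φ x ^ 2‖ := by rw [norm_pow, Real.norm_eq_abs, sq_abs]; ring

end Asymptotics

lemma summable_log_pow_div_sub_one_sq (k : ℕ) :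
    Summable fun n : ℕ ↦ Real.log n ^ k / ((n : ℝ) - 1) ^ 2 := by
  have hlog : (fun x : ℝ ↦ Real.log x ^ k) =O[atTop] fun x ↦ x ^ (1 / 2 : ℝ) :=
    (isLittleO_log_rpow_rpow_atTop k one_half_pos).isBigO.congr_left fun x ↦ rpow_natCast _ _
  have hden : (fun x : ℝ ↦ ((x - 1) ^ 2)⁻¹) =O[atTop] fun x ↦ (x ^ 2)⁻¹ := by
    refine .of_bound 4 ((eventually_ge_atTop 2).mono fun x hx ↦ ?_)
    have hx2 : 0 < (x / 2) ^ 2 := by positivity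
    calc ‖((x - 1) ^ 2)⁻¹‖ = ((x - 1) ^ 2)⁻¹ := Real.norm_of_nonneg (by positivity)
      _ ≤ ((x / 2) ^ 2)⁻¹ := by gcongr; linarith
      _ = 4 * ‖(x ^ 2)⁻¹‖ := by rw [Real.norm_of_nonneg (by positivity)]; ring
  have hreal : (fun x : ℝ ↦ Real.log x ^ k / (x - 1) ^ 2) =O[atTop] fun x ↦ x ^ (-3 / 2 : ℝ) := by
    refine (hlog.mul hden).congr' (.of_forall fun x ↦ (div_eq_mul_inv _ _).symm)
      ((eventually_gt_atTop 0).mono fun x hx ↦ ?_)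
    simp only [← rpow_natCast, ← rpow_neg hx.le, ← rpow_add hx]
    norm_num
  exact summable_of_isBigO_nat' (Real.summable_nat_rpow.mpr (by norm_num))
    (hreal.comp_tendsto tendsto_natCast_atTop_atTop)

theorem isBigO_tprod_one_sub_one_sub_cexp_sq_div {ι : Type*} (L D : ι → ℝ)
    (h2 : Summable fun i ↦ L i ^ 2 / D i) (h3 : Summable fun i ↦ L i ^ 3 / D i)
    (h4 : Summable fun i ↦ L i ^ 4 / D i) :
    (fun ε : ℝ ↦ ∏' i, (1 - (1 - cexp (I * ε * L i)) ^ 2 / (D i : ℂ)) - 1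
        - ((∑' i, L i ^ 2 / D i : ℝ) : ℂ) * ε ^ 2 - I * ((∑' i, L i ^ 3 / D i : ℝ) : ℂ) * ε ^ 3)
      =O[𝓝 0] fun ε ↦ ε ^ 4 := by
  obtain ⟨C, hC⟩ := exists_norm_one_sub_cexp_I_mul_sq_add_le
  set a : ℝ → ι → ℂ := fun ε i ↦ -((1 - cexp (I * ↑(ε * L i))) ^ 2 / D i)
  set b : ℝ → ι → ℂ := fun ε i ↦
    ((L i ^ 2 / D i : ℝ) : ℂ) * ε ^ 2 + I * ((L i ^ 3 / D i : ℝ) : ℂ) * ε ^ 3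
  have ha (ε : ℝ) (i : ι) : ‖a ε i‖ ≤ ε ^ 2 * ‖L i ^ 2 / D i‖ := by
    have h : ‖1 - cexp (I * ↑(ε * L i))‖ ≤ |ε * L i| := by
      rw [norm_sub_rev]; exact norm_exp_I_mul_ofReal_sub_one_le
    calc ‖a ε i‖ = ‖1 - cexp (I * ↑(ε * L i))‖ ^ 2 / |D i| := by simp [a]
      _ ≤ |ε * L i| ^ 2 / |D i| := by gcongr
      _ = ε ^ 2 * ‖L i ^ 2 / D i‖ := by
          rw [Real.norm_eq_abs, abs_div, sq_abs, abs_of_nonneg (sq_nonneg (L i))]; ring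
  have hab (ε : ℝ) (i : ι) : ‖a ε i - b ε i‖ ≤ C * ε ^ 4 * ‖L i ^ 4 / D i‖ := by
    set θ := ε * L i
    have h : a ε i - b ε i = -(((1 - cexp (I * θ)) ^ 2 + θ ^ 2 + I * θ ^ 3) / D i) := by
      simp only [a, b, θ]; push_cast; ring
    calc ‖a ε i - b ε i‖ = ‖(1 - cexp (I * θ)) ^ 2 + θ ^ 2 + I * θ ^ 3‖ / |D i| := by
          rw [h, norm_neg, norm_div, norm_real, Real.norm_eq_abs]
      _ ≤ C * θ ^ 4 / |D i| := by gcongr; exact hC θ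
      _ = C * ε ^ 4 * ‖L i ^ 4 / D i‖ := by
          rw [Real.norm_eq_abs, abs_div, abs_of_nonneg (by positivity : 0 ≤ L i ^ 4)]; ring
  have hb (ε : ℝ) : HasSum (b ε) (((∑' i, L i ^ 2 / D i : ℝ) : ℂ) * ε ^ 2
      + I * ((∑' i, L i ^ 3 / D i : ℝ) : ℂ) * ε ^ 3) :=
    ((Complex.hasSum_ofReal.mpr h2.hasSum).mul_right _).add
      (((Complex.hasSum_ofReal.mpr h3.hasSum).mul_left I).mul_right _)
  have hprod := isBigO_tprod_one_add_sub_one_sub_tsum (l := 𝓝 0) (a := a)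
    (φ := fun ε : ℝ ↦ ε ^ 2) (by simpa using (continuous_pow 2).tendsto (0 : ℝ)) h2.norm ha
  have hsum := isBigO_tsum_sub_tsum (l := 𝓝 0) (f := a) (g := b)
    (fun ε ↦ .of_norm_bounded (h2.norm.mul_left _) (ha ε)) (fun ε ↦ (hb ε).summable) h4.norm hab
  refine ((hprod.congr_right fun ε ↦ by ring).add
    (hsum.trans (isBigO_const_mul_self C _ _))).congr_left fun ε ↦ ?_
  have hfactor (i : ι) : 1 - (1 - cexp (I * ε * L i)) ^ 2 / (D i : ℂ) = 1 + a ε i := by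
    simp only [a, ofReal_mul, ← mul_assoc]; ring
  rw [(hb ε).tsum_eq, tprod_congr hfactor]
  ring

/-- Expansion of the Hardy–Littlewood product as `ε → 0`:
`Π_p [1 − (1 − p^{iε})²/(p−1)²] = 1 + c₀ ε² + i Q ε³ + O(ε⁴)`,
with `c₀ = Σ_p (log p)²/(p−1)²` and `Q = Σ_p (log p)³/(p−1)²`. -/
theorem hl_product_expansion :
    (fun ε : ℝ =>
        (∏' p : Nat.Primes,
            (1 - (1 - Complex.exp (Complex.I * ε * Real.log ((p : ℕ) : ℝ))) ^ 2
              / ((((p : ℕ) : ℝ) : ℂ) - 1) ^ 2))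
          - 1
          - ((∑' p : Nat.Primes,
               Real.log ((p : ℕ) : ℝ) ^ 2 / (((p : ℕ) : ℝ) - 1) ^ 2 : ℝ) : ℂ) * ε ^ 2
          - Complex.I * ((∑' p : Nat.Primes,
               Real.log ((p : ℕ) : ℝ) ^ 3 / (((p : ℕ) : ℝ) - 1) ^ 2 : ℝ) : ℂ) * ε ^ 3)
      =O[nhds 0] fun ε : ℝ => ε ^ 4 := by
  have hsummable (k : ℕ) :
      Summable fun p : Nat.Primes ↦ Real.log ((p : ℕ) : ℝ) ^ k / (((p : ℕ) : ℝ) - 1) ^ 2 :=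
    (summable_log_pow_div_sub_one_sq k).comp_injective Subtype.val_injective
  have := isBigO_tprod_one_sub_one_sub_cexp_sq_div (fun p : Nat.Primes ↦ Real.log ((p : ℕ) : ℝ))
    (fun p ↦ (((p : ℕ) : ℝ) - 1) ^ 2) (hsummable 2) (hsummable 3) (hsummable 4)
  simpa only [ofReal_pow, ofReal_sub, ofReal_one] using this
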